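/- arXiv:1406.5475 — 5 statements merged into one kernel-verified Lean document; each statement's English description precedes it below -/
import Mathlib

section
/- Let m, N₀, H₀, r₀ be real numbers with m > 0, N₀ > 0, r₀ > 0, H₀ ≥ 2·N₀/r₀, and 4·N₀ = 4·m·H₀ + r₀²·N₀·H₀². Then N₀² ≤ 1 − 2·m/r₀. -/
/-!
With `x = H₀ r₀`, the Gauß–Bonnet constraint eliminates the mass and turns the Schwarzschild
deficit `r₀ - 2m - N₀² r₀`, multiplied by `2x`, into `r₀ (x - 2N₀)(N₀ x + 2)`; the monotonicity
hypothesis `x ≥ 2N₀` makes this nonnegative.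
-/

theorem two_mul_mul_schwarzschild_deficit_eq {m N H r : ℝ}
    (hGB : 4 * N = 4 * m * H + r ^ 2 * N * H ^ 2) :
    2 * (H * r) * (r - 2 * m - N ^ 2 * r) = r * (H * r - 2 * N) * (N * (H * r) + 2) := by
  linear_combination r * hGB

theorem schwarzschild_deficit_nonneg {m N H r : ℝ} (hN : 0 < N) (hr : 0 < r)
    (hHr : 2 * N ≤ H * r) (hGB : 4 * N = 4 * m * H + r ^ 2 * N * H ^ 2) :
    0 ≤ r - 2 * m - N ^ 2 * r := by
  have hx : 0 < 2 * (H * r) := by linarith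
  have hfactor : 0 ≤ r * (H * r - 2 * N) * (N * (H * r) + 2) :=
    mul_nonneg (mul_nonneg hr.le (by linarith)) (by nlinarith)
  rw [← two_mul_mul_schwarzschild_deficit_eq hGB] at hfactor
  exact nonneg_of_mul_nonneg_right hfactor hx

theorem schwarzschild_inequality_one_general
    (m N₀ H₀ r₀ : ℝ)
    (hN₀ : N₀ > 0) (hr₀ : r₀ > 0)
    (hH : H₀ ≥ 2 * N₀ / r₀)
    (hGB : 4 * N₀ = 4 * m * H₀ + r₀ ^ 2 * N₀ * H₀ ^ 2) :
    N₀ ^ 2 ≤ 1 - 2 * m / r₀ := by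
  have hHr : 2 * N₀ ≤ H₀ * r₀ := (div_le_iff₀ hr₀).1 hH
  have hdeficit := schwarzschild_deficit_nonneg hN₀ hr₀ hHr hGB
  have hmass : 2 * m / r₀ ≤ 1 - N₀ ^ 2 := by
    rw [div_le_iff₀ hr₀]
    linarith
  linarith

/-- First Schwarzschild-type inequality: from `H₀ ≥ 2N₀/r₀` and the
Gauß–Bonnet constraint `4N₀ = 4mH₀ + r₀²N₀H₀²` with `m, N₀, r₀ > 0` one
deduces `N₀² ≤ 1 − 2m/r₀`. -/
theorem schwarzschild_inequality_one
    (m N₀ H₀ r₀ : ℝ)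
    (hm : m > 0) (hN₀ : N₀ > 0) (hr₀ : r₀ > 0)
    (hH : H₀ ≥ 2 * N₀ / r₀)
    (hGB : 4 * N₀ = 4 * m * H₀ + r₀ ^ 2 * N₀ * H₀ ^ 2) :
    N₀ ^ 2 ≤ 1 - 2 * m / r₀ :=
  schwarzschild_inequality_one_general m N₀ H₀ r₀ hN₀ hr₀ hH hGB
end

section
/- Let m, N₀, H₀, r₀ be real numbers with m > 0, 0 < N₀ < 1, r₀ > 0, H₀ ≥ 2·N₀/r₀, 4·N₀ = 4·m·H₀ + r₀²·N₀·H₀², and m·(H₀·N₀ + 4·m/r₀²) ≥ 1 − N₀². Then N₀² ≥ 1 − 2·m/r₀. -/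
/-- Second Schwarzschild-type inequality: from `m(H₀N₀ + 4m/r₀²) ≥ 1 − N₀²`,
`H₀ ≥ 2N₀/r₀` and the Gauß–Bonnet constraint `4N₀ = 4mH₀ + r₀²N₀H₀²` with
`m > 0`, `0 < N₀ < 1`, `r₀ > 0`, one deduces `N₀² ≥ 1 − 2m/r₀`. -/
theorem schwarzschild_inequality_two
    (m N₀ H₀ r₀ : ℝ)
    (hm : m > 0) (hN₀ : 0 < N₀) (hN₀' : N₀ < 1) (hr₀ : r₀ > 0)
    (hH : H₀ ≥ 2 * N₀ / r₀)
    (hGB : 4 * N₀ = 4 * m * H₀ + r₀ ^ 2 * N₀ * H₀ ^ 2)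
    (hineq : m * (H₀ * N₀ + 4 * m / r₀ ^ 2) ≥ 1 - N₀ ^ 2) :
    N₀ ^ 2 ≥ 1 - 2 * m / r₀ := by
  have hH' : H₀ * r₀ ≥ 2 * N₀ := by
    rw [ge_iff_le, div_le_iff₀ hr₀] at hH; linarith
  have hHpos : H₀ > 0 := by nlinarith
  have h2 : (0:ℝ) < r₀ ^ 2 := by positivity
  have key : m * (H₀ * N₀ + 4 * m / r₀ ^ 2) * r₀ ^ 2 = m * (H₀ * N₀ * r₀ ^ 2 + 4 * m) := by
    field_simp
  have hineq' : m * (H₀ * N₀ * r₀ ^ 2 + 4 * m) ≥ (1 - N₀ ^ 2) * r₀ ^ 2 := by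
    nlinarith [mul_le_mul_of_nonneg_right hineq h2.le]
  have hgoal : 1 - N₀ ^ 2 ≤ 2 * m / r₀ := by
    rw [le_div_iff₀ hr₀]
    nlinarith [sq_nonneg (H₀ * r₀ - 2 * N₀), mul_pos hm hHpos, mul_pos hr₀ hHpos,
      mul_pos hm (mul_pos hr₀ hHpos), sq_nonneg (H₀*r₀ + 2*N₀), mul_pos hN₀ hHpos,
      mul_pos (mul_pos hm hHpos) (mul_pos hN₀ hr₀)]
  linarith
end

section
/- Let m, N₀, H₀, r₀, 𝔥 be real numbers with 𝔥 > 0, N₀ > 0, 𝔥·r₀ = √3, H₀ = (2/3)·𝔥, N₀ = m·𝔥, 2·N₀ ≤ r₀·H₀, and m·(H₀·N₀ + 4·m/r₀²) ≥ 1 − N₀². Then N₀ = 1/√3, N₀² = 1 − 2·m/r₀, H₀ = 2·N₀/r₀, m = 1/(√3·𝔥), and r₀ = 3·m. -/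
/-!
Since `𝔥 r₀ = √3` and `H₀ = 2𝔥/3`, the first inequality reads `N₀ ≤ 1/√3`, while after
substituting `m = N₀/𝔥` and `r₀² = 3/𝔥²` the second one reads `2N₀² ≥ 1 − N₀²`, i.e.
`N₀ ≥ 1/√3` for positive `N₀`. So `N₀ = 1/√3`, and the remaining values follow.
-/

lemma ne_zero_of_mul_eq_sqrt_three {a b : ℝ} (h : a * b = √3) : a ≠ 0 ∧ b ≠ 0 :=
  mul_ne_zero_iff.1 (h ▸ (Real.sqrt_pos.2 (by norm_num)).ne')

lemma le_inv_sqrt_three_of_two_mul_le {N₀ H₀ r₀ 𝔥 : ℝ} (hhr : 𝔥 * r₀ = √3)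
    (hH : H₀ = 2 / 3 * 𝔥) (hineq : 2 * N₀ ≤ r₀ * H₀) : N₀ ≤ 1 / √3 := by
  have hrH : r₀ * H₀ = 2 * (1 / √3) := by
    rw [hH, eq_comm, ← mul_div_assoc, mul_one, div_eq_iff (by positivity)]
    linear_combination -2 / 3 * √3 * hhr - 2 / 3 * Real.sq_sqrt (show (0 : ℝ) ≤ 3 by norm_num)
  linarith

lemma mass_mul_eq_two_mul_sq {m N₀ H₀ r₀ 𝔥 : ℝ} (hhr : 𝔥 * r₀ = √3)
    (hH : H₀ = 2 / 3 * 𝔥) (hN : N₀ = m * 𝔥) :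
    m * (H₀ * N₀ + 4 * m / r₀ ^ 2) = 2 * N₀ ^ 2 := by
  have hr₀ : r₀ ≠ 0 := (ne_zero_of_mul_eq_sqrt_three hhr).2
  have hsq : (𝔥 * r₀) ^ 2 = 3 := hhr ▸ Real.sq_sqrt (by norm_num)
  subst hH hN
  field_simp
  linear_combination -4 * m ^ 2 * hsq

lemma eq_inv_sqrt_three_of_le_of_le_three_mul_sq {x : ℝ} (hx : 0 < x) (hle : x ≤ 1 / √3)
    (hsq : 1 ≤ 3 * x ^ 2) : x = 1 / √3 := by
  refine le_antisymm hle ((pow_le_pow_iff_left₀ (by positivity) hx.le two_ne_zero).1 ?_)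
  rw [div_pow, Real.sq_sqrt (by norm_num)]
  linarith

theorem photon_sphere_schwarzschild_values_general
    (m N₀ H₀ r₀ 𝔥 : ℝ)
    (hN₀ : N₀ > 0)
    (hhr : 𝔥 * r₀ = Real.sqrt 3)
    (hH : H₀ = (2 / 3) * 𝔥)
    (hN : N₀ = m * 𝔥)
    (hineq1 : 2 * N₀ ≤ r₀ * H₀)
    (hineq2 : m * (H₀ * N₀ + 4 * m / r₀ ^ 2) ≥ 1 - N₀ ^ 2) :
    N₀ = 1 / Real.sqrt 3 ∧ N₀ ^ 2 = 1 - 2 * m / r₀ ∧ H₀ = 2 * N₀ / r₀ ∧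
      m = 1 / (Real.sqrt 3 * 𝔥) ∧ r₀ = 3 * m := by
  have h𝔥 : 𝔥 ≠ 0 := (ne_zero_of_mul_eq_sqrt_three hhr).1
  rw [mass_mul_eq_two_mul_sq hhr hH hN] at hineq2
  have hN₀_eq : N₀ = 1 / √3 := eq_inv_sqrt_three_of_le_of_le_three_mul_sq hN₀
    (le_inv_sqrt_three_of_two_mul_le hhr hH hineq1) (by linarith)
  have hm : m = N₀ / 𝔥 := by rw [hN, mul_div_cancel_right₀ _ h𝔥]
  have hr₀_eq : r₀ = √3 / 𝔥 := by rw [← hhr, mul_div_cancel_left₀ _ h𝔥]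
  have hs : √3 ^ 2 = (3 : ℝ) := Real.sq_sqrt (by norm_num)
  subst hm hr₀_eq hH hN₀_eq
  refine ⟨rfl, ?_, ?_, ?_, ?_⟩ <;> field_simp <;> norm_num [hs]

/-- The algebraic endgame of the photon sphere uniqueness proof: the
Gauß–Bonnet relations `𝔥r₀ = √3`, `H₀ = 2𝔥/3`, `N₀ = m𝔥` and the two
integrated Israel-type inequalities force all data to their Schwarzschild
values: `N₀ = 1/√3`, `N₀² = 1 − 2m/r₀`, `H₀ = 2N₀/r₀`, `m = 1/(√3 𝔥)`,
`r₀ = 3m`. -/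
theorem photon_sphere_schwarzschild_values
    (m N₀ H₀ r₀ 𝔥 : ℝ)
    (h𝔥 : 𝔥 > 0) (hN₀ : N₀ > 0)
    (hhr : 𝔥 * r₀ = Real.sqrt 3)
    (hH : H₀ = (2 / 3) * 𝔥)
    (hN : N₀ = m * 𝔥)
    (hineq1 : 2 * N₀ ≤ r₀ * H₀)
    (hineq2 : m * (H₀ * N₀ + 4 * m / r₀ ^ 2) ≥ 1 - N₀ ^ 2) :
    N₀ = 1 / Real.sqrt 3 ∧ N₀ ^ 2 = 1 - 2 * m / r₀ ∧ H₀ = 2 * N₀ / r₀ ∧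
      m = 1 / (Real.sqrt 3 * 𝔥) ∧ r₀ = 3 * m :=
  photon_sphere_schwarzschild_values_general m N₀ H₀ r₀ 𝔥 hN₀ hhr hH hN hineq1 hineq2
end

section
/- Let m > 0 and r₀ > 2·m, and let N : (r₀, ∞) → ℝ be twice differentiable with N(r) > 0 for all r, satisfying N(r)·N''(r) + 2·N(r)·N'(r)/r + N'(r)² = 0 for all r ∈ (r₀, ∞), N(r) → 1 as r → ∞, and N(r) → √(1 − 2·m/r₀) as r → r₀⁺. Then N(r) = √(1 − 2·m/r) for all r ∈ (r₀, ∞). -/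
/-!
Writing `u = N²`, the equation reads `(r² u')' = 0`, since `u'' = 2 N N'' + 2 N'²`. Hence
`r² u' = c` and `N² = A - c / r` for constants `A`, `c`; the limit at infinity forces `A = 1`
and the limit at `r₀` forces `c = 2m`.
-/

open Filter Topology Set

theorem exists_eq_const_of_hasDerivAt_zero_Ioi {f : ℝ → ℝ} {a : ℝ}
    (hf : ∀ x ∈ Ioi a, HasDerivAt f 0 x) : ∃ C, ∀ x ∈ Ioi a, f x = C :=
  isOpen_Ioi.exists_is_const_of_deriv_eq_zero isPreconnected_Ioi
    (fun x hx => (hf x hx).differentiableAt.differentiableWithinAt) fun x hx => (hf x hx).deriv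

section LapseEquation

variable {N : ℝ → ℝ} {a : ℝ}

theorem hasDerivAt_sq_mul_two_mul_deriv {x : ℝ} (hN : DifferentiableAt ℝ N x)
    (hN' : DifferentiableAt ℝ (deriv N) x) (hx : x ≠ 0) :
    HasDerivAt (fun y => y ^ 2 * (2 * N y * deriv N y))
      (2 * x ^ 2 * (N x * deriv (deriv N) x + 2 * N x * deriv N x / x + deriv N x ^ 2)) x := by
  have h := (hasDerivAt_pow 2 x).fun_mul ((hN.hasDerivAt.const_mul 2).fun_mul hN'.hasDerivAt)
  refine h.congr_deriv ?_
  field_simp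
  ring

theorem exists_two_mul_mul_deriv_eq_div_sq (ha : 0 ≤ a)
    (hN : ∀ r ∈ Ioi a, DifferentiableAt ℝ N r)
    (hN' : ∀ r ∈ Ioi a, DifferentiableAt ℝ (deriv N) r)
    (hode : ∀ r ∈ Ioi a,
      N r * deriv (deriv N) r + 2 * N r * deriv N r / r + deriv N r ^ 2 = 0) :
    ∃ c, ∀ x ∈ Ioi a, 2 * N x * deriv N x = c / x ^ 2 := by
  obtain ⟨c, hc⟩ := exists_eq_const_of_hasDerivAt_zero_Ioi fun x (hx : a < x) => by
    simpa [hode x hx] using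
      hasDerivAt_sq_mul_two_mul_deriv (hN x hx) (hN' x hx) (ha.trans_lt hx).ne'
  refine ⟨c, fun x (hx : a < x) => ?_⟩
  rw [eq_div_iff (pow_pos (ha.trans_lt hx) 2).ne', ← hc x hx, mul_comm]

theorem exists_sq_eq_sub_div (ha : 0 ≤ a)
    (hN : ∀ r ∈ Ioi a, DifferentiableAt ℝ N r)
    (hN' : ∀ r ∈ Ioi a, DifferentiableAt ℝ (deriv N) r)
    (hode : ∀ r ∈ Ioi a,
      N r * deriv (deriv N) r + 2 * N r * deriv N r / r + deriv N r ^ 2 = 0) :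
    ∃ A c, ∀ x ∈ Ioi a, N x ^ 2 = A - c / x := by
  obtain ⟨c, hc⟩ := exists_two_mul_mul_deriv_eq_div_sq ha hN hN' hode
  obtain ⟨A, hA⟩ := exists_eq_const_of_hasDerivAt_zero_Ioi (f := fun y => N y ^ 2 + c / y)
    fun x (hx : a < x) => by
      have hx0 : x ≠ 0 := (ha.trans_lt hx).ne'
      have h := ((hN x hx).hasDerivAt.fun_pow 2).fun_add ((hasDerivAt_inv hx0).const_mul c)
      simp only [← div_eq_mul_inv] at h
      refine h.congr_deriv ?_
      simp only [Nat.cast_ofNat, Nat.add_one_sub_one, pow_one, hc x hx]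
      ring
  exact ⟨A, c, fun x hx => by linarith [hA x hx]⟩

end LapseEquation

theorem eq_of_tendsto_atTop_of_eq_sub_div {f : ℝ → ℝ} {a A c L : ℝ}
    (hf : ∀ x ∈ Ioi a, f x = A - c / x) (hL : Tendsto f atTop (𝓝 L)) : A = L := by
  have hlim : Tendsto (fun x : ℝ => A - c / x) atTop (𝓝 A) := by
    simpa using tendsto_const_nhds.sub (tendsto_const_nhds.div_atTop (tendsto_id (α := ℝ)))
  refine tendsto_nhds_unique (hlim.congr' ?_) hL
  filter_upwards [eventually_gt_atTop a] with x hx using (hf x hx).symm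

theorem eq_of_tendsto_nhdsGT_of_eq_sub_div {f : ℝ → ℝ} {a A c L : ℝ} (ha : a ≠ 0)
    (hf : ∀ x ∈ Ioi a, f x = A - c / x) (hL : Tendsto f (𝓝[>] a) (𝓝 L)) :
    A - c / a = L := by
  have hlim : Tendsto (fun x : ℝ => A - c / x) (𝓝[>] a) (𝓝 (A - c / a)) :=
    (continuousAt_const.sub (continuousAt_const.div continuousAt_id ha)).continuousWithinAt
  refine tendsto_nhds_unique (hlim.congr' ?_) hL
  filter_upwards [self_mem_nhdsWithin] with x hx using (hf x hx).symm

/-- Uniqueness of the Schwarzschild lapse: a positive solution of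
`N·N'' + 2·N·N'/r + (N')² = 0` on `(r₀, ∞)` with `N → 1` at infinity and
`N → √(1 − 2m/r₀)` at `r₀` is the Schwarzschild lapse `N(r) = √(1 − 2m/r)`. -/
theorem schwarzschild_lapse_uniqueness
    (m r₀ : ℝ) (hm : 0 < m) (hr₀ : 2 * m < r₀) (N : ℝ → ℝ)
    (hN : ∀ r ∈ Set.Ioi r₀, DifferentiableAt ℝ N r)
    (hN' : ∀ r ∈ Set.Ioi r₀, DifferentiableAt ℝ (deriv N) r)
    (hNpos : ∀ r ∈ Set.Ioi r₀, N r > 0)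
    (hode : ∀ r ∈ Set.Ioi r₀,
      N r * deriv (deriv N) r + 2 * N r * deriv N r / r + deriv N r ^ 2 = 0)
    (hinfty : Tendsto N atTop (𝓝 1))
    (hbdry : Tendsto N (𝓝[>] r₀) (𝓝 (Real.sqrt (1 - 2 * m / r₀)))) :
    ∀ r ∈ Set.Ioi r₀, N r = Real.sqrt (1 - 2 * m / r) := by
  have hr₀pos : 0 < r₀ := by linarith
  obtain ⟨A, c, hsq⟩ := exists_sq_eq_sub_div hr₀pos.le hN hN' hode
  have hA : A = 1 := by
    simpa using eq_of_tendsto_atTop_of_eq_sub_div hsq (hinfty.pow 2)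
  have hc : c = 2 * m := by
    have hnonneg : 0 ≤ 1 - 2 * m / r₀ := by
      rw [sub_nonneg, div_le_one hr₀pos]
      exact hr₀.le
    have h := eq_of_tendsto_nhdsGT_of_eq_sub_div hr₀pos.ne' hsq (hbdry.pow 2)
    rw [Real.sq_sqrt hnonneg, hA] at h
    field_simp at h
    linarith
  intro r hr
  rw [← hA, ← hc, ← hsq r hr, Real.sqrt_sq (hNpos r hr).le]
end

section
/- Let m > 0, let I ⊆ ℝ be an open interval, and let t, r, φ : I → ℝ be twice differentiable with r(s) > 2m for all s ∈ I, satisfying the equatorial Schwarzschild geodesic equations: t''= −(2m/(r²·W))·r'·t', φ'' = −(2/r)·r'·φ', and r'' = −(m·W/r²)·t'² + (m/(r²·W))·r'² + (r − 2m)·φ'², where W := 1 − 2m/r. Suppose in addition that −W·t'² + r'²/W + r²·φ'² = 0 on I (the null condition) and that r(s₀) = 3m and r'(s₀) = 0 for some s₀ ∈ I. Then r(s) = 3m for all s ∈ I. -/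
/-!
Along a null geodesic the null condition eliminates `t'` from the radial equation, which
becomes `r'' = (r - 3m) φ'²`. Hence `y = r - 3m` solves the linear equation `y'' = φ'² y` with
continuous coefficient, and the initial data `y(s₀) = y'(s₀) = 0` force `y ≡ 0` by uniqueness
for linear ODEs.
-/

open Set

theorem IsOpen.exists_Icc_subset_of_ordConnected {I : Set ℝ} (hI : IsOpen I)
    (hIc : I.OrdConnected) {x y : ℝ} (hx : x ∈ I) (hy : y ∈ I) :
    ∃ a b, Icc a b ⊆ I ∧ x ∈ Ioo a b ∧ y ∈ Ioo a b := by
  obtain ⟨εx, hεx, hIx⟩ := Metric.nhds_basis_closedBall.mem_iff.mp (hI.mem_nhds hx)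
  obtain ⟨εy, hεy, hIy⟩ := Metric.nhds_basis_closedBall.mem_iff.mp (hI.mem_nhds hy)
  rw [Real.closedBall_eq_Icc] at hIx hIy
  refine ⟨min (x - εx) (y - εy), max (x + εx) (y + εy), hIc.out ?_ ?_, ?_, ?_⟩
  · exact min_rec' (· ∈ I) (hIx (left_mem_Icc.2 (by linarith)))
      (hIy (left_mem_Icc.2 (by linarith)))
  · exact max_rec' (· ∈ I) (hIx (right_mem_Icc.2 (by linarith)))
      (hIy (right_mem_Icc.2 (by linarith)))
  · exact ⟨min_lt_iff.2 (.inl (by linarith)), lt_max_iff.2 (.inl (by linarith))⟩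
  · exact ⟨min_lt_iff.2 (.inr (by linarith)), lt_max_iff.2 (.inr (by linarith))⟩

theorem eqOn_zero_of_deriv_deriv_eq_mul {I : Set ℝ} (hI : IsOpen I) (hIc : I.OrdConnected)
    {y c : ℝ → ℝ} (hy : ∀ s ∈ I, DifferentiableAt ℝ y s)
    (hy' : ∀ s ∈ I, DifferentiableAt ℝ (deriv y) s) (hc : ContinuousOn c I)
    (hyc : ∀ s ∈ I, deriv (deriv y) s = c s * y s)
    {s₀ : ℝ} (hs₀ : s₀ ∈ I) (h₀ : y s₀ = 0) (h₀' : deriv y s₀ = 0) :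
    EqOn y 0 I := by
  intro s₁ hs₁
  obtain ⟨a, b, habI, hs₀ab, hs₁ab⟩ := hI.exists_Icc_subset_of_ordConnected hIc hs₀ hs₁
  obtain ⟨B, hB⟩ :=
    isCompact_Icc.bddAbove_image (continuous_nnnorm.comp_continuousOn (hc.mono habI))
  have hlip : ∀ τ ∈ Ioo a b,
      LipschitzOnWith (max 1 B) (fun x : ℝ × ℝ => (x.2, c τ * x.1)) univ := fun τ hτ =>
    have hcB : ‖c τ‖₊ ≤ B := hB (mem_image_of_mem _ (Ioo_subset_Icc_self hτ))
    ((LipschitzWith.prod_snd.prodMk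
      ((lipschitzWith_smul (c τ)).comp LipschitzWith.prod_fst)).weaken
        (max_le_max le_rfl (by simpa using hcB))).lipschitzOnWith
  have hsol : ∀ τ ∈ Ioo a b, HasDerivAt (fun s => (y s, deriv y s))
      (deriv y τ, c τ * y τ) τ ∧ (y τ, deriv y τ) ∈ univ := fun τ hτ => by
    have hτI := habI (Ioo_subset_Icc_self hτ)
    refine ⟨?_, mem_univ _⟩
    rw [← hyc τ hτI]
    exact (hy τ hτI).hasDerivAt.prodMk (hy' τ hτI).hasDerivAt
  have hzero : ∀ τ ∈ Ioo a b, HasDerivAt (fun _ => (0 : ℝ × ℝ))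
      ((0 : ℝ × ℝ).2, c τ * (0 : ℝ × ℝ).1) τ ∧ (0 : ℝ × ℝ) ∈ univ :=
    fun τ _ =>
    ⟨(hasDerivAt_const τ _).congr_deriv (by ext <;> simp), mem_univ _⟩
  exact congrArg Prod.fst
    (ODE_solution_unique_of_mem_Ioo hlip hs₀ab hsol hzero (by simp [h₀, h₀']) hs₁ab)

theorem schwarzschild_radial_accel_of_null {m r r' r'' t' φ' W : ℝ} (hr : r ≠ 0) (hW : W ≠ 0)
    (hnull : -W * t' ^ 2 + r' ^ 2 / W + r ^ 2 * φ' ^ 2 = 0)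
    (hgeo : r'' = -(m * W / r ^ 2) * t' ^ 2 + (m / (r ^ 2 * W)) * r' ^ 2
      + (r - 2 * m) * φ' ^ 2) :
    r'' = φ' ^ 2 * (r - 3 * m) := by
  have hr' : r' ^ 2 = W ^ 2 * t' ^ 2 - W * r ^ 2 * φ' ^ 2 := by
    field_simp at hnull
    linarith
  rw [hgeo, hr']
  field_simp
  ring

theorem schwarzschild_photon_sphere_invariance_general
    (m : ℝ) (hm : 0 < m)
    (I : Set ℝ) (hIopen : IsOpen I) (hIconn : I.OrdConnected)
    (t r φ : ℝ → ℝ)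
    (hr : ∀ s ∈ I, DifferentiableAt ℝ r s)
    (hr' : ∀ s ∈ I, DifferentiableAt ℝ (deriv r) s)
    (hφ' : ∀ s ∈ I, DifferentiableAt ℝ (deriv φ) s)
    (hr2m : ∀ s ∈ I, r s > 2 * m)
    (W : ℝ → ℝ) (hW : ∀ s : ℝ, W s = 1 - 2 * m / r s)
    (geor : ∀ s ∈ I, deriv (deriv r) s =
      -(m * W s / r s ^ 2) * deriv t s ^ 2
        + (m / (r s ^ 2 * W s)) * deriv r s ^ 2
        + (r s - 2 * m) * deriv φ s ^ 2)
    (hnull : ∀ s ∈ I,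
      -W s * deriv t s ^ 2 + deriv r s ^ 2 / W s + r s ^ 2 * deriv φ s ^ 2 = 0)
    (s₀ : ℝ) (hs₀ : s₀ ∈ I) (hr₀ : r s₀ = 3 * m) (hr'₀ : deriv r s₀ = 0) :
    ∀ s ∈ I, r s = 3 * m := by
  have hrpos : ∀ s ∈ I, 0 < r s := fun s hs => by linarith [hr2m s hs]
  have hWpos : ∀ s ∈ I, 0 < W s := fun s hs => by
    rw [hW, sub_pos, div_lt_one (hrpos s hs)]
    linarith [hr2m s hs]
  have hradial : ∀ s ∈ I, deriv (deriv r) s = deriv φ s ^ 2 * (r s - 3 * m) := fun s hs =>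
    schwarzschild_radial_accel_of_null (hrpos s hs).ne' (hWpos s hs).ne'
      (hnull s hs) (geor s hs)
  have hy := eqOn_zero_of_deriv_deriv_eq_mul (y := fun s => r s - 3 * m) hIopen hIconn
    (fun s hs => (hr s hs).sub_const _) (by simpa using hr')
    (fun s hs => ((hφ' s hs).continuousAt.pow 2).continuousWithinAt)
    (fun s hs => by simpa using hradial s hs) hs₀ (by simp [hr₀]) (by simpa using hr'₀)
  exact fun s hs => sub_eq_zero.mp (hy hs)

/-- The defining property of the Schwarzschild photon sphere: a null
equatorial geodesic that is initially tangent to `{r = 3m}` (i.e. `r(s₀) = 3m`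
and `r'(s₀) = 0`) stays on `{r = 3m}`. -/
theorem schwarzschild_photon_sphere_invariance
    (m : ℝ) (hm : 0 < m)
    (I : Set ℝ) (hIopen : IsOpen I) (hIconn : I.OrdConnected)
    (t r φ : ℝ → ℝ)
    (ht : ∀ s ∈ I, DifferentiableAt ℝ t s)
    (ht' : ∀ s ∈ I, DifferentiableAt ℝ (deriv t) s)
    (hr : ∀ s ∈ I, DifferentiableAt ℝ r s)
    (hr' : ∀ s ∈ I, DifferentiableAt ℝ (deriv r) s)
    (hφ : ∀ s ∈ I, DifferentiableAt ℝ φ s)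
    (hφ' : ∀ s ∈ I, DifferentiableAt ℝ (deriv φ) s)
    (hr2m : ∀ s ∈ I, r s > 2 * m)
    (W : ℝ → ℝ) (hW : ∀ s : ℝ, W s = 1 - 2 * m / r s)
    (geot : ∀ s ∈ I, deriv (deriv t) s =
      -(2 * m / (r s ^ 2 * W s)) * deriv r s * deriv t s)
    (geoφ : ∀ s ∈ I, deriv (deriv φ) s =
      -(2 / r s) * deriv r s * deriv φ s)
    (geor : ∀ s ∈ I, deriv (deriv r) s =
      -(m * W s / r s ^ 2) * deriv t s ^ 2
        + (m / (r s ^ 2 * W s)) * deriv r s ^ 2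
        + (r s - 2 * m) * deriv φ s ^ 2)
    (hnull : ∀ s ∈ I,
      -W s * deriv t s ^ 2 + deriv r s ^ 2 / W s + r s ^ 2 * deriv φ s ^ 2 = 0)
    (s₀ : ℝ) (hs₀ : s₀ ∈ I) (hr₀ : r s₀ = 3 * m) (hr'₀ : deriv r s₀ = 0) :
    ∀ s ∈ I, r s = 3 * m :=
  schwarzschild_photon_sphere_invariance_general m hm I hIopen hIconn t r φ hr hr' hφ' hr2m W hW
    geor hnull s₀ hs₀ hr₀ hr'₀
end
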